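/- Case (iii) of the characterization of the gH-derivative: suppose the left-sided derivatives dL⁻ = lim_{t→0⁻} γL(t) and dU⁻ = lim_{t→0⁻} γU(t) exist, that γL and γU are right complementary at 0 with values {kL, kU} where kL < kU, and that min(dL⁻, dU⁻) = kL and max(dL⁻, dU⁻) = kU. Then the interval-valued function F(x) = [fL(x), fU(x)] is gH-differentiable at x₀ with gH-derivative [kL, kU]. -/

import Mathlib

open Filter Topology

/-- The difference quotient `γ(t) = (f(x₀+t) − f(x₀))/t`. -/
noncomputable def gamma (f : ℝ → ℝ) (x₀ : ℝ) (t : ℝ) : ℝ :=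
  (f (x₀ + t) - f x₀) / t

/-- The interval-valued function `F(x) = [fL(x), fU(x)]` is gH-differentiable at `x₀` with
gH-derivative `[a,b]` (`a ≤ b`) if `min(γL(t), γU(t)) → a` and `max(γL(t), γU(t)) → b`
as `t → 0` through `t ≠ 0`. -/
def gHDifferentiableAt (fL fU : ℝ → ℝ) (x₀ a b : ℝ) : Prop :=
  a ≤ b ∧
  Tendsto (fun t => min (gamma fL x₀ t) (gamma fU x₀ t)) (𝓝[≠] (0 : ℝ)) (𝓝 a) ∧
  Tendsto (fun t => max (gamma fL x₀ t) (gamma fU x₀ t)) (𝓝[≠] (0 : ℝ)) (𝓝 b)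

/-- `γL, γU` are left complementary at `0` with values `{kL, kU}`, `kL < kU`:
the sets of left cluster values of `γL` and `γU` at `0` both equal `{kL, kU}`, and
`min(γL(t), γU(t)) → kL`, `max(γL(t), γU(t)) → kU` as `t → 0⁻`. -/
def LeftComplementary (γL γU : ℝ → ℝ) (kL kU : ℝ) : Prop :=
  kL < kU ∧
  {c : ℝ | MapClusterPt c (𝓝[<] (0 : ℝ)) γL} = {kL, kU} ∧
  {c : ℝ | MapClusterPt c (𝓝[<] (0 : ℝ)) γU} = {kL, kU} ∧
  Tendsto (fun t => min (γL t) (γU t)) (𝓝[<] (0 : ℝ)) (𝓝 kL) ∧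
  Tendsto (fun t => max (γL t) (γU t)) (𝓝[<] (0 : ℝ)) (𝓝 kU)

/-- `γL, γU` are right complementary at `0` with values `{kL, kU}`, `kL < kU`. -/
def RightComplementary (γL γU : ℝ → ℝ) (kL kU : ℝ) : Prop :=
  kL < kU ∧
  {c : ℝ | MapClusterPt c (𝓝[>] (0 : ℝ)) γL} = {kL, kU} ∧
  {c : ℝ | MapClusterPt c (𝓝[>] (0 : ℝ)) γU} = {kL, kU} ∧
  Tendsto (fun t => min (γL t) (γU t)) (𝓝[>] (0 : ℝ)) (𝓝 kL) ∧
  Tendsto (fun t => max (γL t) (γU t)) (𝓝[>] (0 : ℝ)) (𝓝 kU)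

theorem Filter.Tendsto.nhdsNE_of_nhdsLT_of_nhdsGT {α β : Type*} [TopologicalSpace α]
    [LinearOrder α] {f : α → β} {a : α} {l : Filter β} (hlt : Tendsto f (𝓝[<] a) l) (hgt : Tendsto f (𝓝[>] a) l) :
    Tendsto f (𝓝[≠] a) l := by
  rw [← nhdsLT_sup_nhdsGT, tendsto_sup]
  exact ⟨hlt, hgt⟩

theorem gH_differentiable_case_iii_general (fL fU : ℝ → ℝ) (x₀ dLm dUm kL kU : ℝ)
    (hLm : Tendsto (gamma fL x₀) (𝓝[<] (0 : ℝ)) (𝓝 dLm))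
    (hUm : Tendsto (gamma fU x₀) (𝓝[<] (0 : ℝ)) (𝓝 dUm))
    (hcomp : RightComplementary (gamma fL x₀) (gamma fU x₀) kL kU)
    (hmin : min dLm dUm = kL)
    (hmax : max dLm dUm = kU) :
    gHDifferentiableAt fL fU x₀ kL kU := by
  obtain ⟨hlt, -, -, hminR, hmaxR⟩ := hcomp
  have hminL : Tendsto (fun t => min (gamma fL x₀ t) (gamma fU x₀ t)) (𝓝[<] 0) (𝓝 kL) :=
    hmin ▸ hLm.min hUm
  have hmaxL : Tendsto (fun t => max (gamma fL x₀ t) (gamma fU x₀ t)) (𝓝[<] 0) (𝓝 kU) :=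
    hmax ▸ hLm.max hUm
  exact ⟨hlt.le, hminL.nhdsNE_of_nhdsLT_of_nhdsGT hminR, hmaxL.nhdsNE_of_nhdsLT_of_nhdsGT hmaxR⟩

/-- Case (iii) of the characterization of the gH-derivative: if the left-sided derivatives
`dL⁻, dU⁻` of `fL, fU` at `x₀` exist, `γL, γU` are right complementary at `0` with values
`{kL, kU}` (`kL < kU`), and `min(dL⁻, dU⁻) = kL`, `max(dL⁻, dU⁻) = kU`, then `F` is
gH-differentiable at `x₀` with gH-derivative `[kL, kU]`. -/
theorem gH_differentiable_case_iii (fL fU : ℝ → ℝ) (x₀ dLm dUm kL kU : ℝ)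
    (hle : ∀ x, fL x ≤ fU x)
    (hLm : Tendsto (gamma fL x₀) (𝓝[<] (0 : ℝ)) (𝓝 dLm))
    (hUm : Tendsto (gamma fU x₀) (𝓝[<] (0 : ℝ)) (𝓝 dUm))
    (hcomp : RightComplementary (gamma fL x₀) (gamma fU x₀) kL kU)
    (hmin : min dLm dUm = kL)
    (hmax : max dLm dUm = kU) :
    gHDifferentiableAt fL fU x₀ kL kU :=
  gH_differentiable_case_iii_general fL fU x₀ dLm dUm kL kU hLm hUm hcomp hmin hmax
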